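/- arXiv:2204.10229 — 5 statements merged into one kernel-verified Lean document; each statement's English description precedes it below -/
import Mathlib

section
/- If U₁ ∈ ℂ_p^{I×I} and U₂ ∈ ℂ_p^{J×J} are unitary tubal matrices, then their Kronecker product U₁ ⊗_t U₂ ∈ ℂ_p^{(I×J)×(I×J)} is a unitary tubal matrix. -/
/-!
STATEMENT 6: the Kronecker product of unitary tubal matrices is unitary.

-/

open scoped BigOperators

/-- Tubal scalars of length `p`: vectors in `ℂ^p`. -/
abbrev TubalScalar (p : ℕ) := Fin p → ℂ

variable {p : ℕ}

/-- Tensor-tensor product of tubal scalars with respect to the invertible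
linear transformation `L`: `a * b := L⁻¹(L a ⊙ L b)`. -/
noncomputable def tmul (L : TubalScalar p ≃ₗ[ℂ] TubalScalar p) (a b : TubalScalar p) :
    TubalScalar p :=
  L.symm (L a * L b)

/-- Tensor-tensor product of tubal matrices: `(A*B)(i,k) := Σ_j A(i,j)*B(j,k)`. -/
noncomputable def tMul {I J K : Type*} [Fintype J] (L : TubalScalar p ≃ₗ[ℂ] TubalScalar p)
    (A : I → J → TubalScalar p) (B : J → K → TubalScalar p) : I → K → TubalScalar p :=
  fun i k => ∑ j, tmul L (A i j) (B j k)

/-- The small-t (face-wise) transpose: `A^t(j,i) := A(i,j)`. -/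
def tTrans {I J : Type*} (A : I → J → TubalScalar p) : J → I → TubalScalar p :=
  fun j i => A i j
/-- Hermitian transpose: `(L(A^H))^{(k)} = (L(A)^{(k)})^H`, i.e. entrywise
`A^H(j,i) = L⁻¹(conj(L(A(i,j))))`. -/
noncomputable def tHerm {I J : Type*} (L : TubalScalar p ≃ₗ[ℂ] TubalScalar p)
    (A : I → J → TubalScalar p) : J → I → TubalScalar p :=
  fun j i => L.symm (star (L (A i j)))

/-- The identity tubal matrix: `e = L⁻¹((1,…,1))` on the diagonal, zero elsewhere. -/
noncomputable def tId {I : Type*} [DecidableEq I] (L : TubalScalar p ≃ₗ[ℂ] TubalScalar p) :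
    I → I → TubalScalar p :=
  fun i j => if i = j then L.symm 1 else 0

/-- A square tubal matrix is unitary if `A*A^H = A^H*A = 𝓘`. -/
noncomputable def tUnitary {I : Type*} [Fintype I] [DecidableEq I]
    (L : TubalScalar p ≃ₗ[ℂ] TubalScalar p) (A : I → I → TubalScalar p) : Prop :=
  tMul L A (tHerm L A) = tId L ∧ tMul L (tHerm L A) A = tId L
/-- The (tensor-tensor product based) Kronecker product of tubal matrices:
rows indexed by pairs `(i,k) ∈ I×K`, columns by pairs `(j,l) ∈ J×L'`, with
`((i,k),(j,l))` entry `A(i,j)*B(k,l)`. -/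
noncomputable def tKron {I J K L' : Type*} (L : TubalScalar p ≃ₗ[ℂ] TubalScalar p)
    (A : I → J → TubalScalar p) (B : K → L' → TubalScalar p) :
    I × K → J × L' → TubalScalar p :=
  fun ik jl => tmul L (A ik.1 jl.1) (B ik.2 jl.2)

lemma tHerm_tKron {I J K L' : Type*} (L : TubalScalar p ≃ₗ[ℂ] TubalScalar p)
    (A : I → J → TubalScalar p) (B : K → L' → TubalScalar p) :
    tHerm L (tKron L A B) = tKron L (tHerm L A) (tHerm L B) := by
  funext x y
  simp [tHerm, tKron, tmul, star_mul']

/-- Under `L` the tensor-tensor product becomes the componentwise product, so both sides are the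
same double sum over `J × J'`. -/
lemma tMul_tKron_tKron {I J K I' J' K' : Type*} [Fintype J] [Fintype J']
    (L : TubalScalar p ≃ₗ[ℂ] TubalScalar p)
    (A : I → J → TubalScalar p) (B : J → K → TubalScalar p)
    (A' : I' → J' → TubalScalar p) (B' : J' → K' → TubalScalar p) :
    tMul L (tKron L A A') (tKron L B B') = tKron L (tMul L A B) (tMul L A' B') := by
  funext x y
  apply L.injective
  simp only [tMul, tKron, tmul, map_sum, LinearEquiv.apply_symm_apply]
  rw [Fintype.sum_prod_type, Finset.sum_mul_sum]
  exact Finset.sum_congr rfl fun m _ => Finset.sum_congr rfl fun n _ => by ring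

lemma tKron_tId_tId {I J : Type*} [DecidableEq I] [DecidableEq J]
    (L : TubalScalar p ≃ₗ[ℂ] TubalScalar p) :
    tKron L (tId L (I := I)) (tId L (I := J)) = tId L := by
  funext ⟨i, j⟩ ⟨i', j'⟩
  by_cases hi : i = i' <;> by_cases hj : j = j' <;> simp [tKron, tId, tmul, hi, hj]

/-- If `U₁ ∈ ℂ_p^{I×I}` and `U₂ ∈ ℂ_p^{J×J}` are unitary tubal matrices, then their
Kronecker product `U₁ ⊗_t U₂ ∈ ℂ_p^{(I×J)×(I×J)}` is a unitary tubal matrix. -/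
theorem tUnitary_tKron {I J : Type*} [Fintype I] [DecidableEq I] [Fintype J] [DecidableEq J]
    (L : TubalScalar p ≃ₗ[ℂ] TubalScalar p)
    (U₁ : I → I → TubalScalar p) (U₂ : J → J → TubalScalar p)
    (h₁ : tUnitary L U₁) (h₂ : tUnitary L U₂) :
    tUnitary L (tKron L U₁ U₂) := by
  obtain ⟨h₁_right, h₁_left⟩ := h₁
  obtain ⟨h₂_right, h₂_left⟩ := h₂
  constructor
  · rw [tHerm_tKron, tMul_tKron_tKron, h₁_right, h₂_right, tKron_tId_tId]
  · rw [tHerm_tKron, tMul_tKron_tKron, h₁_left, h₂_left, tKron_tId_tId]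
end

section
/- Existence of Hot-SVD: every tubal tensor A ∈ ℂ_p^{I₁×⋯×I_N} can be written as A = S *₁ U₁ *₂ U₂ ⋯ *_N U_N, where each U_n ∈ ℂ_p^{I_n×I_n} is a unitary tubal matrix and the core S ∈ ℂ_p^{I₁×⋯×I_N} is all-orthogonal: for all 1 ≤ n ≤ N and all 1 ≤ α ≠ β ≤ I_n, the sum over i₁,…,i_{n−1},i_{n+1},…,i_N of S(i₁,…,i_{n−1},α,i_{n+1},…,i_N)^H * S(i₁,…,i_{n−1},β,i_{n+1},…,i_N) equals the zero tubal scalar. Moreover, if L = c·W with c ∈ ℂ nonzero and W : ℂ^p → ℂ^p unitary for the standard Hermitian inner product, the decomposition can be chosen so that in addition, for every n, ‖S_{i_n=1}‖ ≥ ‖S_{i_n=2}‖ ≥ ⋯ ≥ ‖S_{i_n=I_n}‖, where S_{i_n=α} is the subtensor of S with n-th index fixed to α and ‖·‖ is the Frobenius norm. -/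
/-!
Applying `L` entrywise is a ring isomorphism from tubal scalars onto `ℂ^p` with componentwise
operations, so every tubal identity splits into `p` independent identities between the complex
frontal slices. For each slice `k` take the classical HOSVD of the complex tensor `L(A)^{(k)}`:
`U_n^{(k)}` diagonalises the Gram matrix of the mode-`n` unfolding, eigenvalues sorted
decreasingly, and the core `A ×₁ U_1ᴴ ⋯ ×_N U_Nᴴ` has that diagonal matrix as its mode-`n` Gram
matrix, because the Kronecker product of the remaining factors is unitary. The diagonal entries
are the squared slice norms of the core in slice `k`. When `L = c • W` with `W` unitary, summing
over `k` recovers the squared slice norms of the tubal core up to the factor `|c|²`, so the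
ordering survives.
-/

open scoped BigOperators

variable {p : ℕ}

/-- The `n`-mode product of a tubal tensor `A` of shape `I : Fin N → ℕ` with a tubal
matrix `U ∈ ℂ_p^{J×I_n}`:
`(A *_n U)(i₁,…,i_{n−1},j,i_{n+1},…,i_N) = Σ_{i_n} A(i₁,…,i_N)*U(j,i_n)`. -/
noncomputable def modeProd {N : ℕ} (L : TubalScalar p ≃ₗ[ℂ] TubalScalar p) (I : Fin N → ℕ)
    (A : ((m : Fin N) → Fin (I m)) → TubalScalar p) (n : Fin N) (J : ℕ)
    (U : Fin J → Fin (I n) → TubalScalar p) :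
    ((m : Fin N) → Fin (Function.update I n J m)) → TubalScalar p :=
  fun idx => ∑ i : Fin (I n),
    tmul L
      (A fun m =>
        if h : m = n then Fin.cast (congrArg I h).symm i
        else Fin.cast (by rw [Function.update_of_ne h]) (idx m))
      (U (Fin.cast (by rw [Function.update_self]) (idx n)) i)

/-- The column index type of the mode-`n` unfolding: tuples
`(i₁,…,i_{n−1},i_{n+1},…,i_N)` ranging over all modes other than `n`. -/
abbrev Cidx {N : ℕ} (I : Fin N → ℕ) (n : Fin N) :=
  (m : {m : Fin N // m ≠ n}) → Fin (I m.1)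

/-- Insert the value `a` at position `n` into a tuple `c` over the remaining modes,
producing a full multi-index `(i₁,…,i_{n−1},a,i_{n+1},…,i_N)`. -/
def insertAt {N : ℕ} {I : Fin N → ℕ} (n : Fin N) (a : Fin (I n)) (c : Cidx I n) :
    (m : Fin N) → Fin (I m) :=
  fun m => if h : m = n then Fin.cast (congrArg I h).symm a else c ⟨m, h⟩

/-- The mode-`n` unfolding of a tubal tensor: the tubal matrix with rows indexed by
`i_n`, columns indexed by the tuples over the remaining modes, and entry
`A_(n)(i_n,(i₁,…,i_{n−1},i_{n+1},…,i_N)) = A(i₁,…,i_N)`. -/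
def unfold {N : ℕ} (I : Fin N → ℕ) (A : ((m : Fin N) → Fin (I m)) → TubalScalar p)
    (n : Fin N) : Fin (I n) → Cidx I n → TubalScalar p :=
  fun a c => A (insertAt n a c)

/-- The full multilinear tubal product `S *₁ U₁ *₂ U₂ ⋯ *_N U_N`, given entrywise by
`(S *₁ U₁ ⋯ *_N U_N)(i₁,…,i_N) = Σ_{j₁,…,j_N} S(j₁,…,j_N)*U₁(i₁,j₁)*⋯*U_N(i_N,j_N)`
(the tensor-tensor products of the tubal scalars are computed via `L`). -/
noncomputable def multiProd {N : ℕ} (L : TubalScalar p ≃ₗ[ℂ] TubalScalar p)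
    (I J : Fin N → ℕ) (S : ((m : Fin N) → Fin (I m)) → TubalScalar p)
    (U : (n : Fin N) → Fin (J n) → Fin (I n) → TubalScalar p) :
    ((m : Fin N) → Fin (J m)) → TubalScalar p :=
  fun idx => ∑ jdx : (m : Fin N) → Fin (I m),
    L.symm (L (S jdx) * ∏ n : Fin N, L (U n (idx n) (jdx n)))
/-- Hermitian transpose of a tubal scalar: `(L(a^H))^{(k)} = conj(L(a)^{(k)})`. -/
noncomputable def tstar (L : TubalScalar p ≃ₗ[ℂ] TubalScalar p) (a : TubalScalar p) :
    TubalScalar p :=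
  L.symm (star (L a))

/-- All-orthogonality of a core tubal tensor `S`: for all modes `n` and all
`α ≠ β`, `Σ S(…,α,…)^H * S(…,β,…) = 0`, the sum being over the remaining indices. -/
noncomputable def allOrth {N : ℕ} (L : TubalScalar p ≃ₗ[ℂ] TubalScalar p)
    (I : Fin N → ℕ) (S : ((m : Fin N) → Fin (I m)) → TubalScalar p) : Prop :=
  ∀ (n : Fin N) (a b : Fin (I n)), a ≠ b →
    ∑ c : Cidx I n, tmul L (tstar L (S (insertAt n a c))) (S (insertAt n b c)) = 0

/-- The Frobenius norm of the subtensor `S_{i_n = a}` of `S` obtained by fixing the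
`n`-th index to `a`. -/
noncomputable def sliceNorm {N : ℕ} (I : Fin N → ℕ)
    (S : ((m : Fin N) → Fin (I m)) → TubalScalar p) (n : Fin N) (a : Fin (I n)) : ℝ :=
  Real.sqrt (∑ c : Cidx I n, ∑ k : Fin p, ‖S (insertAt n a c) k‖ ^ 2)

/-- Ordering of the slice norms of the core: `‖S_{i_n=1}‖ ≥ ⋯ ≥ ‖S_{i_n=I_n}‖`. -/
noncomputable def ordering {N : ℕ} (I : Fin N → ℕ)
    (S : ((m : Fin N) → Fin (I m)) → TubalScalar p) : Prop :=
  ∀ (n : Fin N) (a b : Fin (I n)), a ≤ b → sliceNorm I S n b ≤ sliceNorm I S n a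

open Finset Matrix

namespace Matrix

variable {σ R : Type*} [Fintype σ]

-- `piKronecker U *ᵥ S` is the multilinear product `S ×₁ U₁ ⋯ ×_N U_N` of a tensor `S`.
def piKronecker {ι κ : σ → Type*} [CommSemiring R] (A : ∀ i, Matrix (ι i) (κ i) R) :
    Matrix (∀ i, ι i) (∀ i, κ i) R :=
  of fun x y => ∏ i, A i (x i) (y i)

@[simp] lemma piKronecker_apply {ι κ : σ → Type*} [CommSemiring R]
    (A : ∀ i, Matrix (ι i) (κ i) R) (x : ∀ i, ι i) (y : ∀ i, κ i) :
    piKronecker A x y = ∏ i, A i (x i) (y i) := rfl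

lemma piKronecker_mul [DecidableEq σ] {ι κ μ : σ → Type*} [∀ i, Fintype (κ i)] [CommSemiring R]
    (A : ∀ i, Matrix (ι i) (κ i) R) (B : ∀ i, Matrix (κ i) (μ i) R) :
    piKronecker A * piKronecker B = piKronecker fun i => A i * B i := by
  ext x z
  simp only [mul_apply, piKronecker_apply, ← prod_mul_distrib, Fintype.prod_sum]

lemma piKronecker_one {ι : σ → Type*} [∀ i, DecidableEq (ι i)] [CommSemiring R] :
    piKronecker (fun i => (1 : Matrix (ι i) (ι i) R)) = 1 := by
  ext x y
  by_cases h : x = y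
  · subst h
    simp
  · obtain ⟨i, hi⟩ := Function.ne_iff.mp h
    rw [piKronecker_apply, one_apply_ne h]
    exact prod_eq_zero (mem_univ i) (one_apply_ne hi)

lemma conjTranspose_piKronecker {ι κ : σ → Type*} [CommSemiring R] [StarRing R]
    (A : ∀ i, Matrix (ι i) (κ i) R) :
    (piKronecker A)ᴴ = piKronecker fun i => (A i)ᴴ := by
  ext x y
  simp [star_prod]

end Matrix

section Matricization

variable {N : ℕ} {I : Fin N → ℕ}

@[simp] lemma insertAt_self (n : Fin N) (a : Fin (I n)) (c : Cidx I n) : insertAt n a c n = a := by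
  simp [insertAt]

@[simp] lemma insertAt_ne {n : Fin N} (m : {m : Fin N // m ≠ n}) (a : Fin (I n)) (c : Cidx I n) :
    insertAt n a c m = c m := by
  simp [insertAt, m.2]

lemma piSplitAt_symm_apply (n : Fin N) (a : Fin (I n)) (c : Cidx I n) :
    (Equiv.piSplitAt n (fun m => Fin (I m))).symm (a, c) = insertAt n a c := by
  funext m
  by_cases h : m = n
  · subst h
    simp [Equiv.piSplitAt]
  · simp [Equiv.piSplitAt, insertAt, h]

lemma sum_eq_sum_insertAt {M : Type*} [AddCommMonoid M] (n : Fin N)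
    (f : (∀ m, Fin (I m)) → M) : ∑ x, f x = ∑ a, ∑ c, f (insertAt n a c) := by
  rw [← (Equiv.piSplitAt n _).symm.sum_comp, Fintype.sum_prod_type]
  simp only [piSplitAt_symm_apply]

lemma prod_insertAt {M : Type*} [CommMonoid M] (n : Fin N) (a : Fin (I n)) (c : Cidx I n)
    (f : ∀ m, Fin (I m) → M) :
    ∏ m, f m (insertAt n a c m) = f n a * ∏ m : {m : Fin N // m ≠ n}, f m (c m) := by
  rw [Fintype.prod_eq_mul_prod_subtype_ne _ n, insertAt_self]
  simp only [insertAt_ne]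

variable {R : Type*}

def matricize (n : Fin N) (T : (∀ m, Fin (I m)) → R) : Matrix (Fin (I n)) (Cidx I n) R :=
  of fun a c => T (insertAt n a c)

def modeGram [Semiring R] [Star R] (n : Fin N) (T : (∀ m, Fin (I m)) → R) :
    Matrix (Fin (I n)) (Fin (I n)) R :=
  matricize n T * (matricize n T)ᴴ

lemma matricize_piKronecker_mulVec [CommSemiring R] {J : Fin N → ℕ}
    (U : ∀ m, Matrix (Fin (J m)) (Fin (I m)) R) (S : (∀ m, Fin (I m)) → R) (n : Fin N) :
    matricize n (piKronecker U *ᵥ S) =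
      U n * matricize n S * piKronecker fun m : {m : Fin N // m ≠ n} => (U m)ᵀ := by
  ext a c
  simp only [matricize, of_apply, mulVec, dotProduct, piKronecker_apply, mul_apply,
    transpose_apply, sum_eq_sum_insertAt n, prod_insertAt, insertAt_self, insertAt_ne, sum_mul]
  rw [sum_comm]
  refine sum_congr rfl fun γ _ => sum_congr rfl fun α _ => ?_
  ring

end Matricization

section Gram

variable {N : ℕ} {I J : Fin N → ℕ} {R : Type*} [CommSemiring R] [StarRing R]

lemma piKronecker_transpose_mul_conjTranspose (n : Fin N)
    {U : ∀ m, Matrix (Fin (J m)) (Fin (I m)) R} (hU : ∀ m, m ≠ n → (U m)ᴴ * U m = 1) :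
    (piKronecker fun m : {m : Fin N // m ≠ n} => (U m)ᵀ) *
      (piKronecker fun m : {m : Fin N // m ≠ n} => (U m)ᵀ)ᴴ = 1 := by
  have hUt : ∀ m : {m : Fin N // m ≠ n}, (U m)ᵀ * (U m)ᵀᴴ = 1 := fun m => by
    rw [conjTranspose_transpose_eq_transpose_conjTranspose, ← transpose_mul, hU m m.2,
      transpose_one]
  rw [conjTranspose_piKronecker, piKronecker_mul]
  simp only [hUt]
  exact piKronecker_one

lemma modeGram_piKronecker_mulVec (U : ∀ m, Matrix (Fin (J m)) (Fin (I m)) R)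
    (S : (∀ m, Fin (I m)) → R) (n : Fin N) (hU : ∀ m, m ≠ n → (U m)ᴴ * U m = 1) :
    modeGram n (piKronecker U *ᵥ S) = U n * modeGram n S * (U n)ᴴ := by
  simp only [modeGram, matricize_piKronecker_mulVec, conjTranspose_mul, Matrix.mul_assoc]
  rw [← Matrix.mul_assoc (piKronecker _), piKronecker_transpose_mul_conjTranspose n hU,
    Matrix.one_mul]

end Gram

theorem Matrix.IsHermitian.exists_unitary_conj_eq_diagonal_antitone {𝕜 : Type*} [RCLike 𝕜]
    {q : ℕ} {G : Matrix (Fin q) (Fin q) 𝕜} (hG : G.IsHermitian) :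
    ∃ V ∈ unitaryGroup (Fin q) 𝕜, ∃ d : Fin q → ℝ, Antitone d ∧
      Vᴴ * G * V = diagonal fun a => (d a : 𝕜) := by
  obtain ⟨U, hU, e, hdiag⟩ : ∃ U ∈ unitaryGroup (Fin q) 𝕜, ∃ e : Fin q → ℝ,
      Uᴴ * G * U = diagonal fun a => (e a : 𝕜) :=
    ⟨_, hG.eigenvectorUnitary.2, hG.eigenvalues, by
      simpa [Unitary.conjStarAlgAut_apply, star_eq_conjTranspose, Function.comp_def] using
        hG.conjStarAlgAut_star_eigenvectorUnitary⟩
  set σ := Tuple.sort (OrderDual.toDual ∘ e)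
  refine ⟨U.submatrix id σ, ?_, e ∘ σ, ?_, ?_⟩
  · rw [mem_unitaryGroup_iff, star_eq_conjTranspose, conjTranspose_submatrix,
      submatrix_mul_equiv, ← star_eq_conjTranspose, mem_unitaryGroup_iff.mp hU, submatrix_id_id]
  · exact monotone_toDual_comp_iff.mp (Tuple.monotone_sort (OrderDual.toDual ∘ e))
  · rw [conjTranspose_submatrix, ← submatrix_id_id G,
      ← submatrix_mul _ _ _ id _ Function.bijective_id,
      ← submatrix_mul _ _ _ id _ Function.bijective_id, hdiag, submatrix_diagonal_equiv]
    rfl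

section HOSVD

variable {𝕜 : Type*} [RCLike 𝕜] {N : ℕ} {I : Fin N → ℕ}

lemma modeGram_apply_self (T : (∀ m, Fin (I m)) → 𝕜) (n : Fin N) (a : Fin (I n)) :
    modeGram n T a a = ((∑ c, ‖T (insertAt n a c)‖ ^ 2 : ℝ) : 𝕜) := by
  simp [modeGram, matricize, mul_apply, RCLike.mul_conj]

theorem exists_hosvd (T : (∀ m, Fin (I m)) → 𝕜) :
    ∃ (S : (∀ m, Fin (I m)) → 𝕜) (V : ∀ n, Matrix (Fin (I n)) (Fin (I n)) 𝕜),
      T = piKronecker V *ᵥ S ∧ (∀ n, V n ∈ unitaryGroup (Fin (I n)) 𝕜) ∧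
        (∀ n, (modeGram n S).IsDiag) ∧
        ∀ n, Antitone fun a => ∑ c, ‖S (insertAt n a c)‖ ^ 2 := by
  choose V hV d hd hVd using fun n =>
    (isHermitian_mul_conjTranspose_self (matricize n T)).exists_unitary_conj_eq_diagonal_antitone
  have hVVH : ∀ n, V n * (V n)ᴴ = 1 := fun n => mem_unitaryGroup_iff.mp (hV n)
  set S := piKronecker (fun m => (V m)ᴴ) *ᵥ T
  have hgram : ∀ n, modeGram n S = diagonal fun a => (d n a : 𝕜) := fun n => by
    rw [modeGram_piKronecker_mulVec _ _ n fun m _ => by rw [conjTranspose_conjTranspose, hVVH],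
      conjTranspose_conjTranspose]
    exact hVd n
  refine ⟨S, V, ?_, hV, fun n => hgram n ▸ isDiag_diagonal _, fun n a b hab => ?_⟩
  · rw [mulVec_mulVec, piKronecker_mul]
    simp only [hVVH, piKronecker_one, one_mulVec]
  · have hslice : ∀ a, ∑ c, ‖S (insertAt n a c)‖ ^ 2 = d n a := fun a => by
      have := modeGram_apply_self S n a
      rw [hgram n, diagonal_apply_eq] at this
      exact_mod_cast this.symm
    simpa only [hslice] using hd n hab

end HOSVD

section Tubal

variable (L : TubalScalar p ≃ₗ[ℂ] TubalScalar p)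

def frontalSlice {α β : Type*} (A : α → β → TubalScalar p) (k : Fin p) : Matrix α β ℂ :=
  of fun i j => L (A i j) k

variable {L}

lemma frontalSlice_ext {α β : Type*} {A B : α → β → TubalScalar p}
    (h : ∀ k, frontalSlice L A k = frontalSlice L B k) : A = B := by
  funext i j
  exact L.injective (funext fun k => congrFun (congrFun (h k) i) j)

lemma frontalSlice_tMul {α β γ : Type*} [Fintype β] (A : α → β → TubalScalar p)
    (B : β → γ → TubalScalar p) (k : Fin p) :
    frontalSlice L (tMul L A B) k = frontalSlice L A k * frontalSlice L B k := by
  ext i j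
  simp [frontalSlice, tMul, tmul, mul_apply, map_sum]

lemma frontalSlice_tHerm {α β : Type*} (A : α → β → TubalScalar p) (k : Fin p) :
    frontalSlice L (tHerm L A) k = (frontalSlice L A k)ᴴ := by
  ext i j
  simp [frontalSlice, tHerm]

lemma frontalSlice_tId {α : Type*} [DecidableEq α] (k : Fin p) :
    frontalSlice L (tId (I := α) L) k = 1 := by
  ext i j
  by_cases h : i = j <;> simp [frontalSlice, tId, one_apply, h]

lemma tUnitary_iff {α : Type*} [Fintype α] [DecidableEq α] {A : α → α → TubalScalar p} :
    tUnitary L A ↔ ∀ k, frontalSlice L A k ∈ unitaryGroup α ℂ := by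
  simp only [tUnitary, Unitary.mem_iff, star_eq_conjTranspose, forall_and]
  constructor
  · rintro ⟨hAAH, hAHA⟩
    exact ⟨fun k => by rw [← frontalSlice_tHerm, ← frontalSlice_tMul, hAHA, frontalSlice_tId],
      fun k => by rw [← frontalSlice_tHerm, ← frontalSlice_tMul, hAAH, frontalSlice_tId]⟩
  · rintro ⟨hAHA, hAAH⟩
    exact ⟨frontalSlice_ext fun k => by
        rw [frontalSlice_tMul, frontalSlice_tHerm, hAAH, frontalSlice_tId],
      frontalSlice_ext fun k => by
        rw [frontalSlice_tMul, frontalSlice_tHerm, hAHA, frontalSlice_tId]⟩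

variable {N : ℕ} {I : Fin N → ℕ}

lemma apply_multiProd_apply {J : Fin N → ℕ} (S : (∀ m, Fin (I m)) → TubalScalar p)
    (U : ∀ n, Fin (J n) → Fin (I n) → TubalScalar p) (idx : ∀ m, Fin (J m)) (k : Fin p) :
    L (multiProd L I J S U idx) k =
      (piKronecker (fun n => frontalSlice L (U n) k) *ᵥ fun jdx => L (S jdx) k) idx := by
  simp [multiProd, map_sum, mulVec, dotProduct, frontalSlice, Finset.prod_apply, mul_comm]

lemma allOrth_of_isDiag {S : (∀ m, Fin (I m)) → TubalScalar p}
    (h : ∀ n k, (modeGram n fun idx => L (S idx) k).IsDiag) : allOrth L I S := by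
  intro n a b hab
  apply L.injective
  funext k
  have hba := h n k hab.symm
  simp only [modeGram, matricize, mul_apply, conjTranspose_apply, of_apply] at hba
  simpa [tmul, tstar, map_sum, Finset.sum_apply, mul_comm] using hba

variable (L)

theorem exists_tubal_hosvd (A : (∀ m, Fin (I m)) → TubalScalar p) :
    ∃ (S : (∀ m, Fin (I m)) → TubalScalar p) (U : ∀ n, Fin (I n) → Fin (I n) → TubalScalar p),
      A = multiProd L I I S U ∧ (∀ n, tUnitary L (U n)) ∧ allOrth L I S ∧
        ∀ n k, Antitone fun a => ∑ c, ‖L (S (insertAt n a c)) k‖ ^ 2 := by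
  choose Ŝ V hA hV hdiag hanti using fun k => exists_hosvd fun idx => L (A idx) k
  set S : (∀ m, Fin (I m)) → TubalScalar p := fun idx => L.symm fun k => Ŝ k idx
  set U : ∀ n, Fin (I n) → Fin (I n) → TubalScalar p := fun n i j => L.symm fun k => V k n i j
  have hS : ∀ k, (fun idx => L (S idx) k) = Ŝ k := fun k => by simp [S]
  have hU : ∀ n k, frontalSlice L (U n) k = V k n := fun n k => by ext; simp [frontalSlice, U]
  refine ⟨S, U, ?_, fun n => tUnitary_iff.mpr fun k => hU n k ▸ hV k n,
    allOrth_of_isDiag fun n k => hS k ▸ hdiag k n, fun n k => ?_⟩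
  · funext idx
    apply L.injective
    funext k
    rw [apply_multiProd_apply, hS]
    simp only [hU]
    exact congrFun (hA k) idx
  · simpa only [← hS k] using hanti k n

end Tubal

lemma sum_norm_sq_eq_of_scaled_isometry {𝕜 ι : Type*} [RCLike 𝕜] [Fintype ι]
    {L W : (ι → 𝕜) → ι → 𝕜} {c : 𝕜} (hc : c ≠ 0)
    (hW : ∀ x, ∑ k, star (W x k) * W x k = ∑ k, star (x k) * x k) (hL : ∀ x, L x = c • W x)
    (x : ι → 𝕜) : ∑ k, ‖x k‖ ^ 2 = (‖c‖ ^ 2)⁻¹ * ∑ k, ‖L x k‖ ^ 2 := by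
  have hWx : ∑ k, ‖W x k‖ ^ 2 = ∑ k, ‖x k‖ ^ 2 := by
    have := hW x
    simp only [RCLike.star_def, RCLike.conj_mul] at this
    exact_mod_cast this
  simp only [hL, Pi.smul_apply, smul_eq_mul, norm_mul, mul_pow, ← mul_sum, hWx]
  field_simp

lemma ordering_of_antitone_sum_norm_sq {N : ℕ} {I : Fin N → ℕ}
    {S : (∀ m, Fin (I m)) → TubalScalar p} (L : TubalScalar p → TubalScalar p) {r : ℝ}
    (hr : 0 ≤ r) (hL : ∀ x, ∑ k, ‖x k‖ ^ 2 = r * ∑ k, ‖L x k‖ ^ 2)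
    (hS : ∀ n k, Antitone fun a => ∑ c, ‖L (S (insertAt n a c)) k‖ ^ 2) : ordering I S := by
  intro n a b hab
  have hslice : ∀ a, ∑ c, ∑ k, ‖S (insertAt n a c) k‖ ^ 2 =
      r * ∑ k, ∑ c, ‖L (S (insertAt n a c)) k‖ ^ 2 := fun a => by
    rw [sum_comm (γ := Fin p), mul_sum]
    exact sum_congr rfl fun c _ => hL _
  rw [sliceNorm, sliceNorm, hslice, hslice]
  exact Real.sqrt_le_sqrt (mul_le_mul_of_nonneg_left (sum_le_sum fun k _ => hS n k hab) hr)

/-- Existence of the Hot-SVD. -/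
theorem exists_hotSVD {N : ℕ} (L : TubalScalar p ≃ₗ[ℂ] TubalScalar p)
    (I : Fin N → ℕ) (A : ((m : Fin N) → Fin (I m)) → TubalScalar p) :
    (∃ (S : ((m : Fin N) → Fin (I m)) → TubalScalar p)
        (U : (n : Fin N) → Fin (I n) → Fin (I n) → TubalScalar p),
        A = multiProd L I I S U ∧ (∀ n, tUnitary L (U n)) ∧ allOrth L I S) ∧
    (∀ (c : ℂ) (W : TubalScalar p →ₗ[ℂ] TubalScalar p), c ≠ 0 →
        (∀ x y : TubalScalar p, ∑ k, star (W x k) * W y k = ∑ k, star (x k) * y k) →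
        (∀ x, L x = c • W x) →
        ∃ (S : ((m : Fin N) → Fin (I m)) → TubalScalar p)
          (U : (n : Fin N) → Fin (I n) → Fin (I n) → TubalScalar p),
          A = multiProd L I I S U ∧ (∀ n, tUnitary L (U n)) ∧ allOrth L I S ∧
            ordering I S) := by
  obtain ⟨S, U, hA, hU, hS, hanti⟩ := exists_tubal_hosvd L A
  refine ⟨⟨S, U, hA, hU, hS⟩, fun c W hc hW hL => ⟨S, U, hA, hU, hS, ?_⟩⟩
  exact ordering_of_antitone_sum_norm_sq L (by positivity)
    (sum_norm_sq_eq_of_scaled_isometry hc (fun x => hW x x) hL) hanti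
end

section
/- Orthogonality with respect to the tensor-tensor product implies Frobenius orthogonality: assume L = c·W where c ∈ ℂ is nonzero and W : ℂ^p → ℂ^p is unitary for the standard Hermitian inner product. Let A₁,…,A_N ∈ ℂ_p^{I₁×I₂} be tubal matrices with A_m^H * A_n = O (the zero tubal matrix) for all 1 ≤ m ≠ n ≤ N. Then ⟨A_m, A_n⟩ = 0 for all m ≠ n, and consequently ‖A₁ + A₂ + ⋯ + A_N‖² = ‖A₁‖² + ‖A₂‖² + ⋯ + ‖A_N‖². -/
/-!
STATEMENT 14: Orthogonality with respect to the tensor-tensor product implies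
Frobenius orthogonality; consequently the Pythagorean identity
‖A₁ + ⋯ + A_N‖² = ‖A₁‖² + ⋯ + ‖A_N‖² holds.
-/

open scoped BigOperators

variable {p : ℕ}

/-- The Frobenius inner product of two tubal matrices of the same size:
`⟨A,B⟩ := Σ (over all positions and all p components) conj(A-component)·(B-component)`. -/
noncomputable def finnerM {I J : Type*} [Fintype I] [Fintype J]
    (A B : I → J → TubalScalar p) : ℂ :=
  ∑ i : I, ∑ j : J, ∑ k : Fin p, star (A i j k) * B i j k

/-- The Frobenius norm of a tubal matrix. -/
noncomputable def tnormM {I J : Type*} [Fintype I] [Fintype J]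
    (A : I → J → TubalScalar p) : ℝ :=
  Real.sqrt (∑ i : I, ∑ j : J, ∑ k : Fin p, ‖A i j k‖ ^ 2)

/-!
Applying `L` entrywise, the `(j, j)` tube of `L(A^H * B)` is `Σ_i conj(L(A i j)) ⊙ L(B i j)`,
so summing over `j` and over the `p` components gives the Frobenius inner product
`⟨L A, L B⟩`. Since `L = c • W` with `W` unitary, that is `|c|² ⟨A, B⟩`; hence `A^H * B = O`
forces `⟨A, B⟩ = 0`, and Pythagoras follows by sesquilinearity.
-/

section Frobenius

variable {I J : Type*} [Fintype I] [Fintype J]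

lemma finnerM_self (A : I → J → TubalScalar p) : finnerM A A = ((tnormM A ^ 2 : ℝ) : ℂ) := by
  rw [tnormM, Real.sq_sqrt (by positivity), finnerM]
  push_cast
  simp_rw [Complex.star_def, Complex.conj_mul']

lemma finnerM_sum_left {ι : Type*} (s : Finset ι) (A : ι → I → J → TubalScalar p)
    (B : I → J → TubalScalar p) :
    finnerM (∑ n ∈ s, A n) B = ∑ n ∈ s, finnerM (A n) B := by
  simp only [finnerM, Finset.sum_apply, star_sum, Finset.sum_mul]
  simp_rw [Finset.sum_comm (s := s)]

lemma finnerM_sum_right {ι : Type*} (s : Finset ι) (A : I → J → TubalScalar p)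
    (B : ι → I → J → TubalScalar p) :
    finnerM A (∑ n ∈ s, B n) = ∑ n ∈ s, finnerM A (B n) := by
  simp only [finnerM, Finset.sum_apply, Finset.mul_sum]
  simp_rw [Finset.sum_comm (s := s)]

lemma finnerM_smul_smul (c : ℂ) (A B : I → J → TubalScalar p) :
    finnerM (c • A) (c • B) = star c * c * finnerM A B := by
  simp only [finnerM, Pi.smul_apply, smul_eq_mul, star_mul', Finset.mul_sum]
  refine Finset.sum_congr rfl fun i _ => Finset.sum_congr rfl fun j _ =>
    Finset.sum_congr rfl fun k _ => by ring

lemma finnerM_comp_of_isometry (W : TubalScalar p → TubalScalar p)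
    (hW : ∀ x y : TubalScalar p, ∑ k, star (W x k) * W y k = ∑ k, star (x k) * y k)
    (A B : I → J → TubalScalar p) :
    finnerM (fun i j => W (A i j)) (fun i j => W (B i j)) = finnerM A B := by
  simp only [finnerM, hW]

lemma tnormM_sum_sq_of_pairwise {ι : Type*} [Fintype ι] (A : ι → I → J → TubalScalar p)
    (hA : Pairwise fun m n => finnerM (A m) (A n) = 0) :
    tnormM (∑ n, A n) ^ 2 = ∑ n, tnormM (A n) ^ 2 := by
  have hdiag (m : ι) : ∑ n, finnerM (A m) (A n) = finnerM (A m) (A m) :=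
    Finset.sum_eq_single m (fun n _ hnm => hA hnm.symm) (by simp)
  apply Complex.ofReal_injective
  rw [← finnerM_self, finnerM_sum_left]
  simp_rw [finnerM_sum_right, hdiag, finnerM_self]
  push_cast
  rfl

end Frobenius

section TensorProduct

variable (L : TubalScalar p ≃ₗ[ℂ] TubalScalar p)

lemma map_tMul_apply {I J K : Type*} [Fintype J] (A : I → J → TubalScalar p)
    (B : J → K → TubalScalar p) (i : I) (k : K) :
    L (tMul L A B i k) = ∑ j, L (A i j) * L (B j k) := by
  simp [tMul, tmul]

lemma map_tHerm_apply {I J : Type*} (A : I → J → TubalScalar p) (i : I) (j : J) :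
    L (tHerm L A j i) = star (L (A i j)) :=
  L.apply_symm_apply _

variable {I J : Type*} [Fintype I] [Fintype J]

lemma finnerM_map_eq_sum_diag_tMul_tHerm (A B : I → J → TubalScalar p) :
    finnerM (fun i j => L (A i j)) (fun i j => L (B i j)) =
      ∑ j, ∑ k, L (tMul L (tHerm L A) B j j) k := by
  simp only [finnerM, map_tMul_apply, map_tHerm_apply, Finset.sum_apply, Pi.mul_apply,
    Pi.star_apply]
  rw [Finset.sum_comm]
  exact Finset.sum_congr rfl fun j _ => Finset.sum_comm

lemma finnerM_eq_zero_of_tMul_tHerm_eq_zero {c : ℂ} (hc : c ≠ 0)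
    {W : TubalScalar p → TubalScalar p}
    (hW : ∀ x y : TubalScalar p, ∑ k, star (W x k) * W y k = ∑ k, star (x k) * y k)
    (hLW : ∀ x, L x = c • W x) {A B : I → J → TubalScalar p}
    (hAB : tMul L (tHerm L A) B = 0) : finnerM A B = 0 := by
  have hscaled : star c * c * finnerM A B = 0 := calc
    star c * c * finnerM A B
        = finnerM (fun i j => L (A i j)) (fun i j => L (B i j)) := by
      have hLX (X : I → J → TubalScalar p) :
          (fun i j => L (X i j)) = c • fun i j => W (X i j) :=
        funext fun i => funext fun j => hLW (X i j)
      rw [hLX, hLX, finnerM_smul_smul, finnerM_comp_of_isometry W hW]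
    _ = 0 := by simp [finnerM_map_eq_sum_diag_tMul_tHerm, hAB]
  simpa [hc] using hscaled

end TensorProduct

theorem tOrth_implies_frobenius_orth {I₁ I₂ : Type*} [Fintype I₁] [Fintype I₂]
    (L : TubalScalar p ≃ₗ[ℂ] TubalScalar p)
    (c : ℂ) (W : TubalScalar p →ₗ[ℂ] TubalScalar p) (hc : c ≠ 0)
    (hW : ∀ x y : TubalScalar p, ∑ k, star (W x k) * W y k = ∑ k, star (x k) * y k)
    (hLW : ∀ x, L x = c • W x)
    (N : ℕ) (A : Fin N → I₁ → I₂ → TubalScalar p)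
    (hAB : ∀ m n : Fin N, m ≠ n → tMul L (tHerm L (A m)) (A n) = 0) :
    (∀ m n : Fin N, m ≠ n → finnerM (A m) (A n) = 0) ∧
    tnormM (∑ n : Fin N, A n) ^ 2 = ∑ n : Fin N, tnormM (A n) ^ 2 := by
  have horth : ∀ m n : Fin N, m ≠ n → finnerM (A m) (A n) = 0 := fun m n hmn =>
    finnerM_eq_zero_of_tMul_tHerm_eq_zero L hc hW hLW (hAB m n hmn)
  exact ⟨horth, tnormM_sum_sq_of_pairwise A horth⟩
end

section
/- Exact error decomposition for multilinear tubal projections: assume L = c·W where c ∈ ℂ is nonzero and W : ℂ^p → ℂ^p is unitary for the standard Hermitian inner product. Let A ∈ ℂ_p^{I₁×⋯×I_N} be a tubal tensor of order N, let Ŭ_n ∈ ℂ_p^{I_n×R_n} (I_n ≥ R_n, n = 1,…,N) be partially unitary tubal matrices, and set Ă := A *₁ (Ŭ₁*Ŭ₁^H) *₂ (Ŭ₂*Ŭ₂^H) ⋯ *_N (Ŭ_N*Ŭ_N^H). Then ‖A − Ă‖² = Σ_{n=1}^{N} ‖A *₁ (Ŭ₁*Ŭ₁^H) ⋯ *_{n−1}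 (Ŭ_{n−1}*Ŭ_{n−1}^H) *_n (𝓘 − Ŭ_n*Ŭ_n^H)‖². -/
/-!
STATEMENT 16: Exact error decomposition for multilinear tubal projections:
‖A − Ă‖² = Σ_{n=1}^{N} ‖A *₁ (Ŭ₁Ŭ₁^H) ⋯ *_{n−1} (Ŭ_{n−1}Ŭ_{n−1}^H) *_n (𝓘 − Ŭ_nŬ_n^H)‖²,
where Ă := A *₁ (Ŭ₁Ŭ₁^H) ⋯ *_N (Ŭ_NŬ_N^H) and each Ŭ_n is partially unitary
(assuming L = c·W with W unitary).
-/

open scoped BigOperators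

variable {p : ℕ}

/-- The Frobenius norm: the square root of the sum, over all positions and all `p`
components, of the squared absolute values of the components. -/
noncomputable def tnorm {ι : Type*} [Fintype ι] (X : ι → TubalScalar p) : ℝ :=
  Real.sqrt (∑ i : ι, ∑ k : Fin p, ‖X i k‖ ^ 2)


/-!
Apply `L` tube by tube and split into the `p` frontal slices. Since `L = c • W` with `W` unitary,
`‖c‖² ‖X‖² = Σ_k ‖L(X)^{(k)}‖²`, and on each slice the tubal operations become the ordinary matrix
ones, `Ŭ_n * Ŭ_nᴴ` becoming an orthogonal projection `P_n`. For an ordinary array `a`, the error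
`a - a ×₁ P₁ ⋯ ×_N P_N` telescopes into the sum over `n` of
`a ×₁ P₁ ⋯ ×_{n-1} P_{n-1} ×_n (1 - P_n)`. Two of these terms differ first in the smaller of their
two special modes, where one carries `1 - P` and the other `P`; as `(1 - P)ᴴ P = 0` they are
orthogonal, and Pythagoras on each slice gives the identity.
-/

open Matrix Finset

theorem star_sum_dotProduct_sum_of_pairwise {ι κ R : Type*} [Fintype κ]
    [NonUnitalNonAssocSemiring R] [StarAddMonoid R] (s : Finset ι) (v : ι → κ → R)
    (h : Pairwise fun i j => star (v i) ⬝ᵥ v j = 0) :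
    star (∑ i ∈ s, v i) ⬝ᵥ ∑ i ∈ s, v i = ∑ i ∈ s, star (v i) ⬝ᵥ v i := by
  classical
  rw [star_sum, sum_dotProduct]
  refine sum_congr rfl fun i hi => ?_
  rw [dotProduct_sum, sum_eq_single_of_mem i hi fun j _ hji => h hji.symm]

theorem star_dotProduct_self_eq_sum_norm_sq {ι 𝕜 : Type*} [Fintype ι] [RCLike 𝕜] (v : ι → 𝕜) :
    star v ⬝ᵥ v = ((∑ i, ‖v i‖ ^ 2 : ℝ) : 𝕜) := by
  simp [dotProduct, RCLike.star_def, RCLike.conj_mul]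

theorem Matrix.isIdempotentElem_mul_conjTranspose_self {m n α : Type*} [Fintype m] [Fintype n]
    [DecidableEq n] [Semiring α] [StarRing α] (u : Matrix m n α) (hu : uᴴ * u = 1) :
    IsIdempotentElem (u * uᴴ) := by
  rw [IsIdempotentElem, Matrix.mul_assoc, ← Matrix.mul_assoc uᴴ, hu, Matrix.one_mul]

section MultilinearProduct

variable {N : ℕ} {κ κ' : Fin N → Type*} [∀ n, Fintype (κ n)] {R : Type*}

/-- The classical multilinear product `a ×₁ X₁ ×₂ X₂ ⋯ ×_N X_N`. -/
def multilinearProd [CommSemiring R] (X : (n : Fin N) → Matrix (κ' n) (κ n) R)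
    (a : ((n : Fin N) → κ n) → R) : ((n : Fin N) → κ' n) → R :=
  fun i => ∑ j, a j * ∏ n, X n (i n) (j n)

theorem multilinearProd_update_sub [CommRing R] (X : (n : Fin N) → Matrix (κ' n) (κ n) R)
    (n : Fin N) (Y Z : Matrix (κ' n) (κ n) R) (a : ((n : Fin N) → κ n) → R) :
    multilinearProd (Function.update X n (Y - Z)) a
      = multilinearProd (Function.update X n Y) a
          - multilinearProd (Function.update X n Z) a := by
  have prod_update : ∀ (V : Matrix (κ' n) (κ n) R) (i : (m : Fin N) → κ' m)
      (j : (m : Fin N) → κ m), ∏ m, Function.update X n V m (i m) (j m)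
        = V (i n) (j n) * ∏ m ∈ univ.erase n, X m (i m) (j m) := by
    intro V i j
    rw [← mul_prod_erase univ _ (mem_univ n), Function.update_self]
    congr 1
    exact prod_congr rfl fun m hm => by rw [Function.update_of_ne (ne_of_mem_erase hm)]
  funext i
  simp only [multilinearProd, Pi.sub_apply, ← sum_sub_distrib, ← mul_sub, prod_update, ← sub_mul]
  rfl

theorem star_multilinearProd_dotProduct [∀ n, Fintype (κ' n)] [CommRing R] [StarRing R]
    (X Y : (n : Fin N) → Matrix (κ' n) (κ n) R) (a : ((n : Fin N) → κ n) → R) :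
    star (multilinearProd X a) ⬝ᵥ multilinearProd Y a
      = ∑ j, ∑ j', star (a j) * a j' * ∏ n, ((X n)ᴴ * Y n) (j n) (j' n) := by
  simp only [dotProduct, multilinearProd, Pi.star_apply, star_sum, star_mul', star_prod,
    sum_mul_sum, conjTranspose_apply, mul_apply]
  rw [sum_comm]
  refine sum_congr rfl fun j _ => ?_
  rw [sum_comm]
  refine sum_congr rfl fun j' _ => ?_
  rw [Fintype.prod_sum, mul_sum]
  refine sum_congr rfl fun i _ => ?_
  rw [prod_mul_distrib]
  ring

theorem star_multilinearProd_dotProduct_eq_zero [∀ n, Fintype (κ' n)] [CommRing R] [StarRing R]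
    {X Y : (n : Fin N) → Matrix (κ' n) (κ n) R} {n : Fin N} (h : (X n)ᴴ * Y n = 0)
    (a : ((n : Fin N) → κ n) → R) :
    star (multilinearProd X a) ⬝ᵥ multilinearProd Y a = 0 := by
  rw [star_multilinearProd_dotProduct]
  refine sum_eq_zero fun j _ => sum_eq_zero fun j' _ => ?_
  rw [prod_eq_zero (mem_univ n) (by rw [h, Matrix.zero_apply]), mul_zero]

variable [∀ n, DecidableEq (κ n)]

theorem multilinearProd_one [CommSemiring R] (a : ((n : Fin N) → κ n) → R) :
    multilinearProd (fun _ => 1) a = a := by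
  funext i
  rw [multilinearProd, sum_eq_single i]
  · simp
  · intro j _ hji
    obtain ⟨n, hn⟩ := Function.ne_iff.1 hji
    rw [prod_eq_zero (mem_univ n) ?_, mul_zero]
    exact one_apply_ne hn.symm
  · simp

def projectionErrorFactors [Ring R] (P : (n : Fin N) → Matrix (κ n) (κ n) R) (n : Fin N) :
    (m : Fin N) → Matrix (κ m) (κ m) R :=
  fun m => if m < n then P m else if m = n then 1 - P m else 1

theorem sub_multilinearProd_eq_sum [CommRing R] (P : (n : Fin N) → Matrix (κ n) (κ n) R)
    (a : ((n : Fin N) → κ n) → R) :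
    a - multilinearProd P a = ∑ n, multilinearProd (projectionErrorFactors P n) a := by
  -- `Q t` projects along the first `t` modes only
  set Q : ℕ → (m : Fin N) → Matrix (κ m) (κ m) R := fun t m => if (m : ℕ) < t then P m else 1
  have hQ_one : ∀ n : Fin N, Function.update (Q n) n 1 = Q n := fun n => by simp [Q]
  have hQ_succ : ∀ n : Fin N, Function.update (Q n) n (P n) = Q (n + 1) := by
    intro n; funext m
    rcases eq_or_ne m n with rfl | h
    · simp [Q]
    · simp [Q, le_iff_lt_or_eq, Fin.val_eq_val, h]
  have hQ_error : ∀ n : Fin N,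
      Function.update (Q n) n (1 - P n) = projectionErrorFactors P n := by
    intro n; funext m
    rcases eq_or_ne m n with rfl | h
    · simp [projectionErrorFactors]
    · simp [Q, projectionErrorFactors, h]
  calc a - multilinearProd P a = multilinearProd (Q 0) a - multilinearProd (Q N) a := by
        simp [Q, multilinearProd_one]
    _ = ∑ t ∈ range N, (multilinearProd (Q t) a - multilinearProd (Q (t + 1)) a) :=
        (sum_range_sub' (fun t => multilinearProd (Q t) a) N).symm
    _ = ∑ n : Fin N, (multilinearProd (Q n) a - multilinearProd (Q (n + 1)) a) :=
        (Fin.sum_univ_eq_sum_range (fun t => _ - _) N).symm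
    _ = ∑ n, multilinearProd (projectionErrorFactors P n) a := by
        refine sum_congr rfl fun n _ => ?_
        rw [← hQ_error, multilinearProd_update_sub, hQ_one, hQ_succ]

theorem star_sub_multilinearProd_dotProduct [CommRing R] [StarRing R]
    (P : (n : Fin N) → Matrix (κ n) (κ n) R) (hH : ∀ n, (P n).IsHermitian)
    (hI : ∀ n, IsIdempotentElem (P n)) (a : ((n : Fin N) → κ n) → R) :
    star (a - multilinearProd P a) ⬝ᵥ (a - multilinearProd P a)
      = ∑ n, star (multilinearProd (projectionErrorFactors P n) a)
          ⬝ᵥ multilinearProd (projectionErrorFactors P n) a := by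
  rw [sub_multilinearProd_eq_sum]
  refine star_sum_dotProduct_sum_of_pairwise _ _ fun n m hnm => ?_
  rcases hnm.lt_or_gt with h | h
  · refine star_multilinearProd_dotProduct_eq_zero (n := n) ?_ a
    simp only [projectionErrorFactors, lt_irrefl, if_true, if_false, h]
    rw [conjTranspose_sub, conjTranspose_one, (hH n).eq, (hI n).one_sub_mul_self]
  · refine star_multilinearProd_dotProduct_eq_zero (n := m) ?_ a
    simp only [projectionErrorFactors, lt_irrefl, if_true, if_false, h]
    rw [(hH m).eq, (hI m).mul_one_sub_self]

theorem sum_norm_sq_sub_multilinearProd {𝕜 : Type*} [RCLike 𝕜]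
    (P : (n : Fin N) → Matrix (κ n) (κ n) 𝕜) (hH : ∀ n, (P n).IsHermitian)
    (hI : ∀ n, IsIdempotentElem (P n)) (a : ((n : Fin N) → κ n) → 𝕜) :
    ∑ i, ‖(a - multilinearProd P a) i‖ ^ 2
      = ∑ n, ∑ i, ‖multilinearProd (projectionErrorFactors P n) a i‖ ^ 2 := by
  have h := star_sub_multilinearProd_dotProduct P hH hI a
  simp only [star_dotProduct_self_eq_sum_norm_sq] at h
  exact_mod_cast h

end MultilinearProduct

section TransformDomain

variable (L : TubalScalar p ≃ₗ[ℂ] TubalScalar p) (k : Fin p)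

/-- The `k`-th frontal slice `L(X)^{(k)}` of a tubal tensor in the transform domain. -/
def transformSlice {ι : Type*} (X : ι → TubalScalar p) : ι → ℂ :=
  fun i => L (X i) k

def transformSliceMat {I J : Type*} (X : I → J → TubalScalar p) : Matrix I J ℂ :=
  Matrix.of fun i j => L (X i j) k

theorem transformSlice_sub {ι : Type*} (X Y : ι → TubalScalar p) :
    transformSlice L k (X - Y) = transformSlice L k X - transformSlice L k Y := by
  funext i
  simp [transformSlice]

theorem transformSliceMat_sub {I J : Type*} (X Y : I → J → TubalScalar p) :
    transformSliceMat L k (X - Y) = transformSliceMat L k X - transformSliceMat L k Y := by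
  ext i j
  simp [transformSliceMat]

theorem transformSliceMat_tMul {I J K : Type*} [Fintype J] (A : I → J → TubalScalar p)
    (B : J → K → TubalScalar p) :
    transformSliceMat L k (tMul L A B) = transformSliceMat L k A * transformSliceMat L k B := by
  ext i l
  simp [transformSliceMat, tMul, tmul, mul_apply]

theorem transformSliceMat_tHerm {I J : Type*} (A : I → J → TubalScalar p) :
    transformSliceMat L k (tHerm L A) = (transformSliceMat L k A)ᴴ := by
  ext i j
  simp [transformSliceMat, tHerm]

theorem transformSliceMat_tId {I : Type*} [DecidableEq I] :
    transformSliceMat L k (tId (I := I) L) = 1 := by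
  ext i j
  by_cases h : i = j <;> simp [transformSliceMat, tId, one_apply, h]

theorem transformSlice_multiProd {N : ℕ} (I J : Fin N → ℕ)
    (S : ((m : Fin N) → Fin (I m)) → TubalScalar p)
    (U : (n : Fin N) → Fin (J n) → Fin (I n) → TubalScalar p) :
    transformSlice L k (multiProd L I J S U)
      = multilinearProd (fun n => transformSliceMat L k (U n)) (transformSlice L k S) := by
  funext i
  simp [transformSlice, multiProd, multilinearProd, transformSliceMat]

theorem sum_norm_sq_transform (c : ℂ) (W : TubalScalar p →ₗ[ℂ] TubalScalar p)
    (hW : ∀ x y : TubalScalar p, ∑ k, star (W x k) * W y k = ∑ k, star (x k) * y k)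
    (hLW : ∀ x, L x = c • W x) (x : TubalScalar p) :
    ∑ k, ‖L x k‖ ^ 2 = ‖c‖ ^ 2 * ∑ k, ‖x k‖ ^ 2 := by
  have hWx : ∑ k, ‖W x k‖ ^ 2 = ∑ k, ‖x k‖ ^ 2 := by
    have h : star (W x) ⬝ᵥ W x = star x ⬝ᵥ x := hW x x
    rw [star_dotProduct_self_eq_sum_norm_sq, star_dotProduct_self_eq_sum_norm_sq] at h
    exact_mod_cast h
  simp only [hLW, Pi.smul_apply, smul_eq_mul, norm_mul, mul_pow, ← mul_sum, hWx]

theorem sq_norm_mul_tnorm_sq (c : ℂ) (W : TubalScalar p →ₗ[ℂ] TubalScalar p)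
    (hW : ∀ x y : TubalScalar p, ∑ k, star (W x k) * W y k = ∑ k, star (x k) * y k)
    (hLW : ∀ x, L x = c • W x) {ι : Type*} [Fintype ι] (X : ι → TubalScalar p) :
    ‖c‖ ^ 2 * tnorm X ^ 2 = ∑ k, ∑ i, ‖transformSlice L k X i‖ ^ 2 := by
  rw [tnorm, Real.sq_sqrt (by positivity), mul_sum, sum_comm]
  simp only [transformSlice, sum_norm_sq_transform L c W hW hLW]

end TransformDomain

theorem multilinear_projection_error_decomposition_general {N : ℕ}
    (L : TubalScalar p ≃ₗ[ℂ] TubalScalar p)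
    (c : ℂ) (W : TubalScalar p →ₗ[ℂ] TubalScalar p) (hc : c ≠ 0)
    (hW : ∀ x y : TubalScalar p, ∑ k, star (W x k) * W y k = ∑ k, star (x k) * y k)
    (hLW : ∀ x, L x = c • W x)
    (I : Fin N → ℕ) (A : ((m : Fin N) → Fin (I m)) → TubalScalar p)
    (R : Fin N → ℕ)
    (Ub : (n : Fin N) → Fin (I n) → Fin (R n) → TubalScalar p)
    (hPU : ∀ n, tMul L (tHerm L (Ub n)) (Ub n) = tId L) :
    tnorm (A - multiProd L I I A (fun m => tMul L (Ub m) (tHerm L (Ub m)))) ^ 2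
      = ∑ n : Fin N,
          tnorm (multiProd L I I A (fun m =>
            if m < n then tMul L (Ub m) (tHerm L (Ub m))
            else if m = n then tId L - tMul L (Ub m) (tHerm L (Ub m))
            else tId L)) ^ 2 := by
  refine mul_left_cancel₀ (pow_ne_zero 2 (norm_ne_zero_iff.2 hc)) ?_
  rw [mul_sum]
  simp only [sq_norm_mul_tnorm_sq L c W hW hLW, transformSlice_sub, transformSlice_multiProd]
  conv_rhs => rw [sum_comm]
  refine sum_congr rfl fun k _ => ?_
  have hu : ∀ n, (transformSliceMat L k (Ub n))ᴴ * transformSliceMat L k (Ub n) = 1 := fun n => by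
    rw [← transformSliceMat_tHerm, ← transformSliceMat_tMul, hPU, transformSliceMat_tId]
  simp only [apply_ite (transformSliceMat L k), transformSliceMat_sub, transformSliceMat_tId,
    transformSliceMat_tMul, transformSliceMat_tHerm]
  exact sum_norm_sq_sub_multilinearProd _ (fun n => isHermitian_mul_conjTranspose_self _)
    (fun n => isIdempotentElem_mul_conjTranspose_self _ (hu n)) _

theorem multilinear_projection_error_decomposition {N : ℕ}
    (L : TubalScalar p ≃ₗ[ℂ] TubalScalar p)
    (c : ℂ) (W : TubalScalar p →ₗ[ℂ] TubalScalar p) (hc : c ≠ 0)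
    (hW : ∀ x y : TubalScalar p, ∑ k, star (W x k) * W y k = ∑ k, star (x k) * y k)
    (hLW : ∀ x, L x = c • W x)
    (I : Fin N → ℕ) (A : ((m : Fin N) → Fin (I m)) → TubalScalar p)
    (R : Fin N → ℕ) (hR : ∀ n, R n ≤ I n)
    (Ub : (n : Fin N) → Fin (I n) → Fin (R n) → TubalScalar p)
    (hPU : ∀ n, tMul L (tHerm L (Ub n)) (Ub n) = tId L) :
    tnorm (A - multiProd L I I A (fun m => tMul L (Ub m) (tHerm L (Ub m)))) ^ 2
      = ∑ n : Fin N,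
          tnorm (multiProd L I I A (fun m =>
            if m < n then tMul L (Ub m) (tHerm L (Ub m))
            else if m = n then tId L - tMul L (Ub m) (tHerm L (Ub m))
            else tId L)) ^ 2 :=
  multilinear_projection_error_decomposition_general L c W hc hW hLW I A R Ub hPU
end

section
/- Residual of a single-mode t-SVD truncation: assume L = c·W where c ∈ ℂ is nonzero and W : ℂ^p → ℂ^p is unitary for the standard Hermitian inner product. Let A ∈ ℂ_p^{I₁×⋯×I_N} be a tubal tensor of order N, let A_(n) = U * Σ * V^H be a t-SVD of its mode-n unfolding, let 1 ≤ I' ≤ I_n, and let Ū ∈ ℂ_p^{I_n×I'} consist of the first I' tubal columns of U. Then ‖A *_n (𝓘 − Ū*Ū^H)‖² = Σ_{i=I'+1}^{I_n} ‖Σ(i,i)‖², where ‖Σ(i,i)‖ is the Frobenius norm of the i-th diagonal tubal scalar of Σ. -/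
/-!
STATEMENT 17: Residual of a single-mode t-SVD truncation: if A_(n) = U * Σ * V^H is a
t-SVD of the mode-n unfolding, and Ū consists of the first I' tubal columns of U, then
‖A *_n (𝓘 − Ū*Ū^H)‖² = Σ_{i=I'+1}^{I_n} ‖Σ(i,i)‖² (assuming L = c·W with W unitary).
-/

open scoped BigOperators

variable {p : ℕ}

/-- The `i`-th diagonal tubal scalar of a (possibly rectangular) tubal matrix,
taken to be `0` when the diagonal position does not exist. -/
noncomputable def sdiag {a b : ℕ} (S : Fin a → Fin b → TubalScalar p) (i : Fin a) :
    TubalScalar p :=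
  if h : (i : ℕ) < b then S i ⟨(i : ℕ), h⟩ else 0

/-- A tubal matrix is f-diagonal if each of its frontal slices is a diagonal matrix,
i.e. all entries off the (numeric) diagonal are the zero tubal scalar. -/
def fDiag {a b : ℕ} (S : Fin a → Fin b → TubalScalar p) : Prop :=
  ∀ (i : Fin a) (j : Fin b), (i : ℕ) ≠ (j : ℕ) → S i j = 0

/-- The Frobenius norm of a tubal scalar. -/
noncomputable def tnormS (a : TubalScalar p) : ℝ :=
  Real.sqrt (∑ k : Fin p, ‖a k‖ ^ 2)

/-!
Everything decouples over the frontal slices of the transform domain: the `k`-th slice of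
`L(·)` turns `tMul` into the matrix product, `tHerm` into the conjugate transpose and
t-unitary matrices into unitary ones, while `L = c • W` with `W` unitary gives
`|c|² ‖X‖² = Σ_k ‖L(X)^{(k)}‖_F²`. The mode-`n` product with `P = 𝓘 − Ū * Ūᴴ` unfolds to
`P * A_(n)`, and on each slice `P U = U D` with `D` the diagonal projection onto the
coordinates `≥ I'`. Unitary invariance of the Frobenius norm then reduces slice `k` to
`‖D S_k‖_F² = Σ_{i ≥ I'} |S_k(i,i)|²`.
-/

open Matrix Finset

section Frobenius

variable {m n : Type*} [Fintype m] [Fintype n]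

def frobSq (M : Matrix m n ℂ) : ℝ := ∑ i, ∑ j, Complex.normSq (M i j)

lemma ofReal_frobSq (M : Matrix m n ℂ) : (frobSq M : ℂ) = (Mᴴ * M).trace := by
  rw [frobSq, sum_comm]
  simp [Matrix.trace, mul_apply, Complex.normSq_eq_conj_mul_self]

lemma frobSq_unitary_mul [DecidableEq m] {U : Matrix m m ℂ} (hU : U ∈ unitaryGroup m ℂ)
    (M : Matrix m n ℂ) : frobSq (U * M) = frobSq M := by
  have hUU : Uᴴ * U = 1 := mem_unitaryGroup_iff'.mp hU
  apply Complex.ofReal_injective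
  rw [ofReal_frobSq, ofReal_frobSq, conjTranspose_mul, Matrix.mul_assoc, ← Matrix.mul_assoc Uᴴ,
    hUU, Matrix.one_mul]

lemma frobSq_mul_conjTranspose_unitary [DecidableEq n] {V : Matrix n n ℂ}
    (hV : V ∈ unitaryGroup n ℂ) (M : Matrix m n ℂ) : frobSq (M * Vᴴ) = frobSq M := by
  have hVV : Vᴴ * V = 1 := mem_unitaryGroup_iff'.mp hV
  apply Complex.ofReal_injective
  rw [ofReal_frobSq, ofReal_frobSq, conjTranspose_mul, conjTranspose_conjTranspose,
    Matrix.mul_assoc, trace_mul_comm, Matrix.mul_assoc, Matrix.mul_assoc, hVV, Matrix.mul_one]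

lemma frobSq_diagonal_mul [DecidableEq m] (d : m → ℂ) (M : Matrix m n ℂ) :
    frobSq (diagonal d * M) = ∑ i, Complex.normSq (d i) * ∑ j, Complex.normSq (M i j) := by
  simp [frobSq, mul_sum]

end Frobenius

section Truncation

variable {r k : ℕ} (h : k ≤ r)

lemma submatrix_castLE_mul_conjTranspose (U : Matrix (Fin r) (Fin r) ℂ) :
    U.submatrix id (Fin.castLE h) * (U.submatrix id (Fin.castLE h))ᴴ
      = U * diagonal (fun j : Fin r => if (j : ℕ) < k then 1 else 0) * Uᴴ := by
  ext a b
  rw [mul_apply, mul_apply]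
  simp only [mul_diagonal, submatrix_apply, id, conjTranspose_apply]
  refine Fintype.sum_of_injective (Fin.castLE h) (Fin.castLE_injective h) _ _ ?_ ?_
  · rintro j hj
    have : ¬ (j : ℕ) < k := fun hjk => hj ⟨⟨j, hjk⟩, rfl⟩
    simp [this]
  · intro j
    simp

lemma frobSq_truncation_residual {M : ℕ} {U : Matrix (Fin r) (Fin r) ℂ}
    (hU : U ∈ unitaryGroup (Fin r) ℂ) (S : Matrix (Fin r) (Fin M) ℂ)
    {V : Matrix (Fin M) (Fin M) ℂ} (hV : V ∈ unitaryGroup (Fin M) ℂ) :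
    frobSq ((1 - U.submatrix id (Fin.castLE h) * (U.submatrix id (Fin.castLE h))ᴴ)
        * (U * (S * Vᴴ)))
      = ∑ i ∈ univ.filter (fun i : Fin r => k ≤ (i : ℕ)), ∑ j, Complex.normSq (S i j) := by
  have hUU : Uᴴ * U = 1 := mem_unitaryGroup_iff'.mp hU
  have hproj : (1 - U.submatrix id (Fin.castLE h) * (U.submatrix id (Fin.castLE h))ᴴ) * U
      = U * diagonal (fun j : Fin r => if (j : ℕ) < k then 0 else 1) := by
    rw [submatrix_castLE_mul_conjTranspose, Matrix.sub_mul, Matrix.one_mul, Matrix.mul_assoc,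
      hUU, Matrix.mul_one]
    nth_rw 1 [← Matrix.mul_one U]
    rw [← Matrix.mul_sub, ← diagonal_one, diagonal_sub]
    congr 2 with j
    split_ifs <;> simp
  rw [← Matrix.mul_assoc, hproj, Matrix.mul_assoc, ← Matrix.mul_assoc _ S,
    frobSq_unitary_mul hU, frobSq_mul_conjTranspose_unitary hV, frobSq_diagonal_mul,
    sum_filter]
  refine sum_congr rfl fun i _ => ?_
  rcases lt_or_ge (i : ℕ) k with hi | hi <;> simp [hi, not_le.mpr, not_lt.mpr]

end Truncation

section Slices

variable {ι κ ν : Type*} (L : TubalScalar p ≃ₗ[ℂ] TubalScalar p)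

def tSlice (A : ι → κ → TubalScalar p) (k : Fin p) : Matrix ι κ ℂ :=
  fun i j => L (A i j) k

lemma tSlice_tMul [Fintype κ] (A : ι → κ → TubalScalar p) (B : κ → ν → TubalScalar p)
    (k : Fin p) : tSlice L (tMul L A B) k = tSlice L A k * tSlice L B k := by
  ext i j
  simp [tSlice, tMul, tmul, mul_apply]

lemma tSlice_tHerm (A : ι → κ → TubalScalar p) (k : Fin p) :
    tSlice L (tHerm L A) k = (tSlice L A k)ᴴ := by
  ext i j
  simp [tSlice, tHerm]

lemma tSlice_tId [DecidableEq ι] (k : Fin p) :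
    tSlice L (tId L : ι → ι → TubalScalar p) k = 1 := by
  ext i j
  by_cases h : i = j <;> simp [tSlice, tId, one_apply, h]

lemma tSlice_sub (A B : ι → κ → TubalScalar p) (k : Fin p) :
    tSlice L (A - B) k = tSlice L A k - tSlice L B k := by
  ext i j
  simp [tSlice]

lemma tUnitary.tSlice_mem_unitaryGroup [Fintype ι] [DecidableEq ι] {U : ι → ι → TubalScalar p}
    (hU : tUnitary L U) (k : Fin p) : tSlice L U k ∈ unitaryGroup ι ℂ := by
  rw [mem_unitaryGroup_iff', star_eq_conjTranspose, ← tSlice_tHerm,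
    ← tSlice_tMul, hU.2, tSlice_tId]

end Slices

section Norms

variable {L : TubalScalar p ≃ₗ[ℂ] TubalScalar p} {c : ℂ} {W : TubalScalar p →ₗ[ℂ] TubalScalar p}

lemma sum_normSq_apply_of_scaled_unitary
    (hW : ∀ x y : TubalScalar p, ∑ k, star (W x k) * W y k = ∑ k, star (x k) * y k)
    (hLW : ∀ x, L x = c • W x) (x : TubalScalar p) :
    ∑ k, Complex.normSq (L x k) = Complex.normSq c * ∑ k, Complex.normSq (x k) := by
  have hWx : ∑ k, Complex.normSq (W x k) = ∑ k, Complex.normSq (x k) := by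
    apply Complex.ofReal_injective
    push_cast
    simpa only [Complex.normSq_eq_conj_mul_self, Complex.star_def] using hW x x
  simp [hLW, Complex.normSq_mul, ← mul_sum, hWx]

variable {ι κ : Type*} [Fintype ι] [Fintype κ]

lemma tnorm_sq (X : ι → TubalScalar p) : tnorm X ^ 2 = ∑ i, ∑ k, Complex.normSq (X i k) := by
  rw [tnorm, Real.sq_sqrt (by positivity)]
  simp [Complex.sq_norm]

lemma tnormS_sq (a : TubalScalar p) : tnormS a ^ 2 = ∑ k, Complex.normSq (a k) := by
  rw [tnormS, Real.sq_sqrt (by positivity)]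
  simp [Complex.sq_norm]

lemma tnorm_comp_equiv (X : ι → TubalScalar p) (e : κ ≃ ι) : tnorm (X ∘ e) = tnorm X := by
  simp only [tnorm, Function.comp_apply, e.sum_comp (fun i => ∑ k, ‖X i k‖ ^ 2)]

lemma normSq_mul_tnorm_uncurry_sq
    (hW : ∀ x y : TubalScalar p, ∑ k, star (W x k) * W y k = ∑ k, star (x k) * y k)
    (hLW : ∀ x, L x = c • W x) (Y : ι → κ → TubalScalar p) :
    Complex.normSq c * tnorm (Function.uncurry Y) ^ 2 = ∑ k, frobSq (tSlice L Y k) := by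
  simp only [tnorm_sq, Fintype.sum_prod_type, Function.uncurry_apply_pair, mul_sum,
    ← sum_normSq_apply_of_scaled_unitary hW hLW, frobSq, tSlice]
  exact (sum_congr rfl fun _ _ => sum_comm).trans sum_comm

end Norms

lemma tmul_comm (L : TubalScalar p ≃ₗ[ℂ] TubalScalar p) (a b : TubalScalar p) :
    tmul L a b = tmul L b a := by
  rw [tmul, tmul, mul_comm]

section ModeProduct

variable {N : ℕ} (I : Fin N → ℕ) (n : Fin N)

def unfoldIndexEquiv (J : ℕ) :
    (Fin J × Cidx I n) ≃ ((m : Fin N) → Fin (Function.update I n J m)) where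
  toFun x m :=
    if h : m = n then Fin.cast (by rw [h, Function.update_self]) x.1
    else Fin.cast (by rw [Function.update_of_ne h]) (x.2 ⟨m, h⟩)
  invFun idx :=
    (Fin.cast (by rw [Function.update_self]) (idx n),
     fun m => Fin.cast (by rw [Function.update_of_ne m.2]) (idx m.1))
  left_inv x := Prod.ext (Fin.ext (by simp)) (funext fun m => Fin.ext (by simp [m.2]))
  right_inv idx := by
    funext m
    by_cases h : m = n
    · subst h
      exact Fin.ext (by simp)
    · exact Fin.ext (by simp [h])

variable (L : TubalScalar p ≃ₗ[ℂ] TubalScalar p) (A : ((m : Fin N) → Fin (I m)) → TubalScalar p)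

lemma modeProd_unfoldIndexEquiv {J : ℕ} (P : Fin J → Fin (I n) → TubalScalar p)
    (a : Fin J) (c : Cidx I n) :
    modeProd L I A n J P (unfoldIndexEquiv I n J (a, c)) = tMul L P (unfold I A n) a c := by
  simp only [modeProd, tMul, unfold]
  refine sum_congr rfl fun i _ => ?_
  rw [tmul_comm]
  congr 2
  · exact Fin.ext (by simp [unfoldIndexEquiv])
  · funext m
    by_cases h : m = n
    · subst h
      exact Fin.ext (by simp [insertAt])
    · exact Fin.ext (by simp [insertAt, unfoldIndexEquiv, h])

lemma tnorm_modeProd {J : ℕ} (P : Fin J → Fin (I n) → TubalScalar p) {κ : Type*} [Fintype κ]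
    (e : Cidx I n ≃ κ) :
    tnorm (modeProd L I A n J P)
      = tnorm (Function.uncurry (tMul L P fun i j => unfold I A n i (e.symm j))) := by
  rw [← tnorm_comp_equiv _ ((Equiv.prodCongr (Equiv.refl _) e.symm).trans
    (unfoldIndexEquiv I n J))]
  congr 1
  funext ⟨a, j⟩
  exact modeProd_unfoldIndexEquiv I n L A P a (e.symm j)

end ModeProduct

lemma fDiag.sum_row {a b : ℕ} {S : Fin a → Fin b → TubalScalar p} (hS : fDiag S)
    {β : Type*} [AddCommMonoid β] (f : TubalScalar p → β) (hf : f 0 = 0) (i : Fin a) :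
    ∑ j, f (S i j) = f (sdiag S i) := by
  unfold sdiag
  split_ifs with h
  · refine sum_eq_single (⟨i, h⟩ : Fin b) (fun j _ hj => ?_) (by simp)
    rw [hS i j (fun h' => hj (Fin.ext h'.symm)), hf]
  · rw [hf]
    exact sum_eq_zero fun j _ => by rw [hS i j (by omega), hf]

theorem truncation_residual_general {N : ℕ}
    (L : TubalScalar p ≃ₗ[ℂ] TubalScalar p)
    (c : ℂ) (W : TubalScalar p →ₗ[ℂ] TubalScalar p) (hc : c ≠ 0)
    (hW : ∀ x y : TubalScalar p, ∑ k, star (W x k) * W y k = ∑ k, star (x k) * y k)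
    (hLW : ∀ x, L x = c • W x)
    (I : Fin N → ℕ) (A : ((m : Fin N) → Fin (I m)) → TubalScalar p)
    (n : Fin N) (M : ℕ) (e : Cidx I n ≃ Fin M)
    (U : Fin (I n) → Fin (I n) → TubalScalar p)
    (Sig : Fin (I n) → Fin M → TubalScalar p)
    (V : Fin M → Fin M → TubalScalar p)
    (hU : tUnitary L U) (hV : tUnitary L V) (hdiag : fDiag Sig)
    (hfact : (fun i j => unfold I A n i (e.symm j))
        = tMul L U (tMul L Sig (tHerm L V)))
    (I' : ℕ) (hI' : I' ≤ I n) :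
    tnorm (modeProd L I A n (I n)
        (tId L - tMul L (fun i (j : Fin I') => U i (Fin.castLE hI' j))
          (tHerm L (fun i (j : Fin I') => U i (Fin.castLE hI' j))))) ^ 2
      = ∑ i ∈ Finset.univ.filter (fun i : Fin (I n) => I' ≤ (i : ℕ)),
          tnormS (sdiag Sig i) ^ 2 := by
  have hrow : ∀ i, Complex.normSq c * tnormS (sdiag Sig i) ^ 2
      = ∑ k, ∑ j, Complex.normSq (tSlice L Sig k i j) := by
    intro i
    rw [tnormS_sq, ← sum_normSq_apply_of_scaled_unitary hW hLW,
      ← hdiag.sum_row (fun a => ∑ k, Complex.normSq (L a k)) (by simp), sum_comm]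
    rfl
  apply mul_left_cancel₀ (Complex.normSq_eq_zero.not.mpr hc)
  rw [tnorm_modeProd I n L A _ e, hfact, normSq_mul_tnorm_uncurry_sq hW hLW, mul_sum]
  simp only [hrow]
  rw [sum_comm]
  refine sum_congr rfl fun k _ => ?_
  simp only [tSlice_tMul, tSlice_sub, tSlice_tId, tSlice_tHerm]
  exact frobSq_truncation_residual hI' (hU.tSlice_mem_unitaryGroup L k) _
    (hV.tSlice_mem_unitaryGroup L k)

theorem truncation_residual {N : ℕ}
    (L : TubalScalar p ≃ₗ[ℂ] TubalScalar p)
    (c : ℂ) (W : TubalScalar p →ₗ[ℂ] TubalScalar p) (hc : c ≠ 0)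
    (hW : ∀ x y : TubalScalar p, ∑ k, star (W x k) * W y k = ∑ k, star (x k) * y k)
    (hLW : ∀ x, L x = c • W x)
    (I : Fin N → ℕ) (A : ((m : Fin N) → Fin (I m)) → TubalScalar p)
    (n : Fin N) (M : ℕ) (e : Cidx I n ≃ Fin M)
    (U : Fin (I n) → Fin (I n) → TubalScalar p)
    (Sig : Fin (I n) → Fin M → TubalScalar p)
    (V : Fin M → Fin M → TubalScalar p)
    (hU : tUnitary L U) (hV : tUnitary L V) (hdiag : fDiag Sig)
    (hfact : (fun i j => unfold I A n i (e.symm j))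
        = tMul L U (tMul L Sig (tHerm L V)))
    (I' : ℕ) (hI'1 : 1 ≤ I') (hI' : I' ≤ I n) :
    tnorm (modeProd L I A n (I n)
        (tId L - tMul L (fun i (j : Fin I') => U i (Fin.castLE hI' j))
          (tHerm L (fun i (j : Fin I') => U i (Fin.castLE hI' j))))) ^ 2
      = ∑ i ∈ Finset.univ.filter (fun i : Fin (I n) => I' ≤ (i : ℕ)),
          tnormS (sdiag Sig i) ^ 2 :=
  truncation_residual_general L c W hc hW hLW I A n M e U Sig V hU hV hdiag hfact I' hI'
end
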